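/- Let c_v > 0, ϱ > 0, p₋, p₊ > 0, ϱ₁ > (2c_v+1)ϱ and v₋ ∈ ℝ. For u > 0 set v₊ := v₋ − u and define μ₀ := ½(−ϱu/(ϱ₁−ϱ) + (p₋−p₊)/(ϱu) + v₋ + v₊), μ₁ := ½(ϱu/(ϱ₁−ϱ) + (p₋−p₊)/(ϱu) + v₋ + v₊), β := (ϱv₊ + μ₁(ϱ₁−ϱ))/ϱ₁, X := ϱ(p₊ − p₋)((2c_v+1)ϱ₁ − ϱ), Y := ϱ₁ϱ·((v₋+μ₀)/(v₋−μ₀) + (μ₁+v₊)/(μ₁−v₊)), Z := p₊ + ((ϱ₁−ϱ)ϱ/ϱ₁)·(v₊ − μ₁)², p₁ := Z − X/Y, ε₁ := X/(ϱ₁Y), and ε₂ := (1/(ϱ₁ϱ))·[(ϱ₁−ϱ)(p₁+p₊) + 2c_v(ϱ₁p₊ − ϱp₁)] + ε₁·((v₊+β)/(v₊−β)·(ϱ₁−ϱ)/ϱ − 1). Then there exists u₀ > 0 such that for all u ≥ u₀: v₋ − μ₀ > 0, μ₁ − v₊ > 0, Y < 0, v₊ ≠ β, and ε₂ > 0. 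-/

import Mathlib

/-!
As `u → ∞`, the differences `v₋ − μ₀`, `μ₁ − v₊` and `β − v₊` grow linearly in `u`, so their
quotients converge: `Y → −4ϱ(ϱ₁ − ϱ) < 0`, `ε₁` converges and `(v₊ + β)/(v₊ − β) → 3`.
Meanwhile `Z`, and with it `p₁ = Z − X/Y`, grows like `u²`. Since `ε₂` is `p₁` times
`(ϱ₁ − (2c_v+1)ϱ)/(ϱ₁ϱ) > 0` plus a convergent term, `ε₂ → ∞`, and all five conditions hold
for large `u`.
-/

noncomputable section

/-- Left interface speed `μ₀` in the equal-density case, with `v₊ = v₋ − u`. -/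
def mu0e (ϱ pm pp ϱ1 vm u : ℝ) : ℝ :=
  (1 / 2) * (-(ϱ * u / (ϱ1 - ϱ)) + (pm - pp) / (ϱ * u) + vm + (vm - u))

/-- Right interface speed `μ₁` in the equal-density case, with `v₊ = v₋ − u`. -/
def mu1e (ϱ pm pp ϱ1 vm u : ℝ) : ℝ :=
  (1 / 2) * (ϱ * u / (ϱ1 - ϱ) + (pm - pp) / (ϱ * u) + vm + (vm - u))

/-- Middle velocity component `β = (ϱv₊ + μ₁(ϱ₁−ϱ))/ϱ₁`. -/
def betae (ϱ pm pp ϱ1 vm u : ℝ) : ℝ :=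
  (ϱ * (vm - u) + mu1e ϱ pm pp ϱ1 vm u * (ϱ1 - ϱ)) / ϱ1

/-- `X = ϱ(p₊ − p₋)((2c_v+1)ϱ₁ − ϱ)`. -/
def Xe (cv ϱ pm pp ϱ1 : ℝ) : ℝ := ϱ * (pp - pm) * ((2 * cv + 1) * ϱ1 - ϱ)

/-- `Y = ϱ₁ϱ((v₋+μ₀)/(v₋−μ₀) + (μ₁+v₊)/(μ₁−v₊))`. -/
def Ye (ϱ pm pp ϱ1 vm u : ℝ) : ℝ :=
  ϱ1 * ϱ * ((vm + mu0e ϱ pm pp ϱ1 vm u) / (vm - mu0e ϱ pm pp ϱ1 vm u) +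
    (mu1e ϱ pm pp ϱ1 vm u + (vm - u)) / (mu1e ϱ pm pp ϱ1 vm u - (vm - u)))

/-- `Z = p₊ + ((ϱ₁−ϱ)ϱ/ϱ₁)(v₊ − μ₁)²`. -/
def Ze (ϱ pm pp ϱ1 vm u : ℝ) : ℝ :=
  pp + ((ϱ1 - ϱ) * ϱ / ϱ1) * ((vm - u) - mu1e ϱ pm pp ϱ1 vm u) ^ 2

/-- The middle pressure `p₁ = Z − X/Y`. -/
def p1e (cv ϱ pm pp ϱ1 vm u : ℝ) : ℝ :=
  Ze ϱ pm pp ϱ1 vm u - Xe cv ϱ pm pp ϱ1 / Ye ϱ pm pp ϱ1 vm u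

/-- The subsolution parameter `ε₁ = X/(ϱ₁Y)`. -/
def eps1e (cv ϱ pm pp ϱ1 vm u : ℝ) : ℝ :=
  Xe cv ϱ pm pp ϱ1 / (ϱ1 * Ye ϱ pm pp ϱ1 vm u)

/-- The subsolution parameter `ε₂`. -/
def eps2e (cv ϱ pm pp ϱ1 vm u : ℝ) : ℝ :=
  (1 / (ϱ1 * ϱ)) *
      ((ϱ1 - ϱ) * (p1e cv ϱ pm pp ϱ1 vm u + pp) +
        2 * cv * (ϱ1 * pp - ϱ * p1e cv ϱ pm pp ϱ1 vm u)) +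
    eps1e cv ϱ pm pp ϱ1 vm u *
      (((vm - u) + betae ϱ pm pp ϱ1 vm u) /
          ((vm - u) - betae ϱ pm pp ϱ1 vm u) * ((ϱ1 - ϱ) / ϱ) - 1)

open Filter Topology

theorem tendsto_mul_add_add_div_atTop {α : ℝ} (hα : 0 < α) (γ δ : ℝ) :
    Tendsto (fun u : ℝ => α * u + γ + δ / u) atTop atTop :=
  ((tendsto_id.const_mul_atTop hα).atTop_add tendsto_const_nhds).atTop_add
    (tendsto_const_nhds.div_atTop tendsto_id)

theorem tendsto_mul_add_add_div_div {α : ℝ} (hα : α ≠ 0) (γ δ α' γ' δ' : ℝ) :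
    Tendsto (fun u : ℝ => (α' * u + γ' + δ' / u) / (α * u + γ + δ / u)) atTop
      (𝓝 (α' / α)) := by
  -- after the substitution `t = u⁻¹` the quotient is rational in `t` and continuous at `0`
  have hcont : ContinuousAt
      (fun t : ℝ => (α' + γ' * t + δ' * t ^ 2) / (α + γ * t + δ * t ^ 2)) 0 :=
    (by fun_prop : Continuous fun t : ℝ => α' + γ' * t + δ' * t ^ 2).continuousAt.div
      (by fun_prop) (by simpa using hα)
  have := hcont.tendsto.comp tendsto_inv_atTop_zero
  simp only [Function.comp_def] at this
  refine Tendsto.congr' ?_ (by simpa using this)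
  filter_upwards [eventually_ne_atTop 0] with u hu
  rw [← mul_div_mul_right _ _ hu]
  congr 1 <;> field_simp

variable {ϱ ϱ1 : ℝ} (pm pp vm : ℝ)

theorem mu0e_eq (u : ℝ) :
    mu0e ϱ pm pp ϱ1 vm u = vm - (ϱ / (ϱ1 - ϱ) + 1) / 2 * u + (pm - pp) / (2 * ϱ) / u := by
  unfold mu0e; ring

theorem mu1e_eq (u : ℝ) :
    mu1e ϱ pm pp ϱ1 vm u = vm + (ϱ / (ϱ1 - ϱ) - 1) / 2 * u + (pm - pp) / (2 * ϱ) / u := by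
  unfold mu1e; ring

theorem betae_eq (hρ : ϱ1 ≠ ϱ) (h0 : ϱ1 ≠ 0) (u : ℝ) :
    betae ϱ pm pp ϱ1 vm u = vm - u / 2 + (pm - pp) / (2 * ϱ) * (ϱ1 - ϱ) / ϱ1 / u := by
  have hs : ϱ / (ϱ1 - ϱ) * (ϱ1 - ϱ) = ϱ := div_mul_cancel₀ _ (sub_ne_zero.2 hρ)
  have h1 : ϱ1 / ϱ1 = 1 := div_self h0
  rw [betae, mu1e_eq, div_eq_iff h0]
  linear_combination (u / 2) * hs - (pm - pp) / (2 * ϱ) * (ϱ1 - ϱ) / u * h1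

theorem tendsto_sub_mu0e_atTop (hϱ : 0 < ϱ) (hρ : ϱ < ϱ1) :
    Tendsto (fun u => vm - mu0e ϱ pm pp ϱ1 vm u) atTop atTop := by
  have := div_pos hϱ (sub_pos.2 hρ)
  refine (tendsto_mul_add_add_div_atTop (α := (ϱ / (ϱ1 - ϱ) + 1) / 2) (by positivity) 0
    (-((pm - pp) / (2 * ϱ)))).congr fun u => ?_
  rw [mu0e_eq]; ring

theorem tendsto_mu1e_sub_atTop (hϱ : 0 < ϱ) (hρ : ϱ < ϱ1) :
    Tendsto (fun u => mu1e ϱ pm pp ϱ1 vm u - (vm - u)) atTop atTop := by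
  have := div_pos hϱ (sub_pos.2 hρ)
  refine (tendsto_mul_add_add_div_atTop (α := (ϱ / (ϱ1 - ϱ) + 1) / 2) (by positivity) 0
    ((pm - pp) / (2 * ϱ))).congr fun u => ?_
  rw [mu1e_eq]; ring

theorem tendsto_betae_sub_atTop (hρ : ϱ < ϱ1) (h0 : 0 < ϱ1) :
    Tendsto (fun u => betae ϱ pm pp ϱ1 vm u - (vm - u)) atTop atTop := by
  refine (tendsto_mul_add_add_div_atTop (α := 1 / 2) (by norm_num) 0
    ((pm - pp) / (2 * ϱ) * (ϱ1 - ϱ) / ϱ1)).congr fun u => ?_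
  rw [betae_eq pm pp vm hρ.ne' h0.ne']; ring

theorem tendsto_Ye (hϱ : 0 < ϱ) (hρ : ϱ < ϱ1) :
    Tendsto (Ye ϱ pm pp ϱ1 vm) atTop (𝓝 (-(4 * ϱ * (ϱ1 - ϱ)))) := by
  have hd : ϱ1 - ϱ ≠ 0 := (sub_pos.2 hρ).ne'
  have h0 : ϱ1 ≠ 0 := (hϱ.trans hρ).ne'
  set a := (ϱ / (ϱ1 - ϱ) + 1) / 2 with ha_def
  have ha : a ≠ 0 := by have := div_pos hϱ (sub_pos.2 hρ); positivity
  set c := (pm - pp) / (2 * ϱ)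
  have hlim : ϱ1 * ϱ * (-a / a + (a - 2) / a) = -(4 * ϱ * (ϱ1 - ϱ)) := by
    have : ϱ / (ϱ1 - ϱ) + 1 = ϱ1 / (ϱ1 - ϱ) := by field_simp; ring
    rw [ha_def, this]; field_simp; ring
  rw [← hlim]
  refine (((tendsto_mul_add_add_div_div ha 0 (-c) (-a) (2 * vm) c).add
    (tendsto_mul_add_add_div_div ha 0 c (a - 2) (2 * vm) c)).const_mul (ϱ1 * ϱ)).congr
    fun u => ?_
  simp only [Ye, mu0e_eq, mu1e_eq]
  congr 3 <;> ring

theorem tendsto_Ze_atTop (hϱ : 0 < ϱ) (hρ : ϱ < ϱ1) :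
    Tendsto (Ze ϱ pm pp ϱ1 vm) atTop atTop := by
  have hc : 0 < (ϱ1 - ϱ) * ϱ / ϱ1 := by
    have := sub_pos.2 hρ; have := hϱ.trans hρ; positivity
  have hsq := (tendsto_pow_atTop two_ne_zero).comp (tendsto_mu1e_sub_atTop pm pp vm hϱ hρ)
  refine tendsto_atTop_add_const_left _ pp ((hsq.const_mul_atTop hc).congr fun u => ?_)
  simp only [Function.comp_apply, ← neg_sub (vm - u), neg_sq]

theorem tendsto_p1e_atTop (cv : ℝ) (hϱ : 0 < ϱ) (hρ : ϱ < ϱ1) :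
    Tendsto (p1e cv ϱ pm pp ϱ1 vm) atTop atTop := by
  have hY : -(4 * ϱ * (ϱ1 - ϱ)) ≠ 0 := by
    have := sub_pos.2 hρ; exact neg_ne_zero.2 (by positivity)
  exact (tendsto_Ze_atTop pm pp vm hϱ hρ).atTop_add
    ((tendsto_const_nhds.div (tendsto_Ye pm pp vm hϱ hρ) hY).neg)

theorem tendsto_eps1e (cv : ℝ) (hϱ : 0 < ϱ) (hρ : ϱ < ϱ1) :
    Tendsto (eps1e cv ϱ pm pp ϱ1 vm) atTop
      (𝓝 (Xe cv ϱ pm pp ϱ1 / (ϱ1 * -(4 * ϱ * (ϱ1 - ϱ))))) := by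
  have hY : ϱ1 * -(4 * ϱ * (ϱ1 - ϱ)) ≠ 0 := by
    have := sub_pos.2 hρ; exact mul_ne_zero (hϱ.trans hρ).ne' (neg_ne_zero.2 (by positivity))
  exact tendsto_const_nhds.div ((tendsto_Ye pm pp vm hϱ hρ).const_mul ϱ1) hY

theorem tendsto_add_betae_div_sub_betae (hρ : ϱ < ϱ1) (h0 : 0 < ϱ1) :
    Tendsto (fun u => (vm - u + betae ϱ pm pp ϱ1 vm u) / (vm - u - betae ϱ pm pp ϱ1 vm u))
      atTop (𝓝 3) := by
  set k := (pm - pp) / (2 * ϱ) * (ϱ1 - ϱ) / ϱ1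
  have := tendsto_mul_add_add_div_div (α := -(1 / 2)) (by norm_num) 0 (-k) (-(3 / 2)) (2 * vm) k
  rw [show (-(3 / 2) : ℝ) / -(1 / 2) = 3 by norm_num] at this
  refine this.congr fun u => ?_
  rw [betae_eq pm pp vm hρ.ne' h0.ne']
  congr 1 <;> ring

theorem eps2e_eq (cv u : ℝ) :
    eps2e cv ϱ pm pp ϱ1 vm u =
      (ϱ1 - (2 * cv + 1) * ϱ) / (ϱ1 * ϱ) * p1e cv ϱ pm pp ϱ1 vm u +
        ((ϱ1 - ϱ + 2 * cv * ϱ1) * pp / (ϱ1 * ϱ) + eps1e cv ϱ pm pp ϱ1 vm u *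
          ((vm - u + betae ϱ pm pp ϱ1 vm u) / (vm - u - betae ϱ pm pp ϱ1 vm u) *
            ((ϱ1 - ϱ) / ϱ) - 1)) := by
  unfold eps2e; ring

theorem tendsto_eps2e_atTop {cv : ℝ} (hϱ : 0 < ϱ) (hρ : ϱ < ϱ1)
    (hϱ1 : (2 * cv + 1) * ϱ < ϱ1) :
    Tendsto (eps2e cv ϱ pm pp ϱ1 vm) atTop atTop := by
  have h0 : 0 < ϱ1 := hϱ.trans hρ
  have hκ : 0 < (ϱ1 - (2 * cv + 1) * ϱ) / (ϱ1 * ϱ) := div_pos (sub_pos.2 hϱ1) (by positivity)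
  refine (((tendsto_p1e_atTop pm pp vm cv hϱ hρ).const_mul_atTop hκ).atTop_add
    (tendsto_const_nhds.add ((tendsto_eps1e pm pp vm cv hϱ hρ).mul
      (((tendsto_add_betae_div_sub_betae pm pp vm hρ h0).mul_const _).sub_const 1)))).congr
    fun u => (eps2e_eq pm pp vm cv u).symm

theorem equal_density_case_large_u_general
    (cv ϱ pm pp ϱ1 vm : ℝ)
    (hcv : 0 < cv) (hϱ : 0 < ϱ)
    (hϱ1 : (2 * cv + 1) * ϱ < ϱ1) :
    ∃ u0 : ℝ, 0 < u0 ∧ ∀ u : ℝ, u0 ≤ u →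
      0 < vm - mu0e ϱ pm pp ϱ1 vm u ∧
      0 < mu1e ϱ pm pp ϱ1 vm u - (vm - u) ∧
      Ye ϱ pm pp ϱ1 vm u < 0 ∧
      (vm - u) ≠ betae ϱ pm pp ϱ1 vm u ∧
      0 < eps2e cv ϱ pm pp ϱ1 vm u := by
  have hρ : ϱ < ϱ1 := by linarith [mul_pos hcv hϱ]
  have hY : -(4 * ϱ * (ϱ1 - ϱ)) < 0 := by
    have := sub_pos.2 hρ; exact neg_neg_of_pos (by positivity)
  have hβ : ∀ᶠ u in atTop, vm - u ≠ betae ϱ pm pp ϱ1 vm u :=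
    ((tendsto_betae_sub_atTop pm pp vm hρ (hϱ.trans hρ)).eventually_gt_atTop 0).mono
      fun u hu => (sub_pos.1 hu).ne
  obtain ⟨u0, hu0⟩ := eventually_atTop.1 <| (eventually_gt_atTop 0).and <|
    ((tendsto_sub_mu0e_atTop pm pp vm hϱ hρ).eventually_gt_atTop 0).and <|
    ((tendsto_mu1e_sub_atTop pm pp vm hϱ hρ).eventually_gt_atTop 0).and <|
    ((tendsto_Ye pm pp vm hϱ hρ).eventually_lt_const hY).and <| hβ.and <|
    (tendsto_eps2e_atTop pm pp vm hϱ hρ hϱ1).eventually_gt_atTop 0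
  exact ⟨u0, (hu0 u0 le_rfl).1, fun u hu => (hu0 u hu).2⟩

/-- **Lemma (equal-density case `ϱ₋ = ϱ₊ = ϱ`).** If `ϱ₁ > (2c_v+1)ϱ` then for
`u = v₋ − v₊` sufficiently large (with `v₋` fixed): `v₋ − μ₀ > 0`,
`μ₁ − v₊ > 0`, `Y < 0`, `v₊ ≠ β` and `ε₂ > 0`. -/
theorem equal_density_case_large_u
    (cv ϱ pm pp ϱ1 vm : ℝ)
    (hcv : 0 < cv) (hϱ : 0 < ϱ) (hpm : 0 < pm) (hpp : 0 < pp)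
    (hϱ1 : (2 * cv + 1) * ϱ < ϱ1) :
    ∃ u0 : ℝ, 0 < u0 ∧ ∀ u : ℝ, u0 ≤ u →
      0 < vm - mu0e ϱ pm pp ϱ1 vm u ∧
      0 < mu1e ϱ pm pp ϱ1 vm u - (vm - u) ∧
      Ye ϱ pm pp ϱ1 vm u < 0 ∧
      (vm - u) ≠ betae ϱ pm pp ϱ1 vm u ∧
      0 < eps2e cv ϱ pm pp ϱ1 vm u :=
  equal_density_case_large_u_general cv ϱ pm pp ϱ1 vm hcv hϱ hϱ1
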